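/- Let λ > 0 and C, D > 0 with √C + √D > √λ, and set N = {(v,w) ∈ ℝ³ × ℝ³ : ⟨v,w⟩ = 0, (1-|v|²)√(λ+|w|²) = √C + √D}. Then every (v,w) ∈ N satisfies |w|² ≥ (√C+√D)² - λ > 0 and |v| < 1, and the map (v,w) ↦ (w/|w|, v) is a homeomorphism from N onto {(w',v') ∈ S² × ℝ³ : ⟨w',v'⟩ = 0, |v'| < 1}, which is homeomorphic to TS². -/

import Mathlib

open scoped RealInnerProductSpace
open Real

/-- `N = {(v,w) ∈ ℝ³ × ℝ³ : ⟨v,w⟩ = 0, (1-|v|²)√(λ+|w|²) = √C + √D}`. -/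
def NSet (lam C D : ℝ) : Set (EuclideanSpace ℝ (Fin 3) × EuclideanSpace ℝ (Fin 3)) :=
  {p | ⟪p.1, p.2⟫ = 0 ∧ (1 - ‖p.1‖ ^ 2) * Real.sqrt (lam + ‖p.2‖ ^ 2) =
    Real.sqrt C + Real.sqrt D}

/-- `TS² = {(v,w) ∈ S² × ℝ³ : ⟨v,w⟩ = 0}`. -/
def TS2 : Set (EuclideanSpace ℝ (Fin 3) × EuclideanSpace ℝ (Fin 3)) :=
  {p | ‖p.1‖ = 1 ∧ ⟪p.1, p.2⟫ = 0}

/-- The open unit-disc bundle inside `TS²`. -/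
def TS2disc : Set (EuclideanSpace ℝ (Fin 3) × EuclideanSpace ℝ (Fin 3)) :=
  {p | ‖p.1‖ = 1 ∧ ⟪p.1, p.2⟫ = 0 ∧ ‖p.2‖ < 1}

abbrev E3 := EuclideanSpace ℝ (Fin 3)

/-- The fiberwise homeomorphism from the open disc bundle to the full tangent bundle. -/
noncomputable def discToTS2homeo : TS2disc ≃ₜ TS2 where
  toFun q := ⟨(q.val.1, (1 - ‖q.val.2‖)⁻¹ • q.val.2), by
    obtain ⟨h1, h2, h3⟩ := q.2
    exact ⟨h1, by rw [real_inner_smul_right, h2, mul_zero]⟩⟩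
  invFun p := ⟨(p.val.1, (1 + ‖p.val.2‖)⁻¹ • p.val.2), by
    obtain ⟨h1, h2⟩ := p.2
    refine ⟨h1, by rw [real_inner_smul_right, h2, mul_zero], ?_⟩
    have h0 : (0:ℝ) < 1 + ‖p.val.2‖ := by positivity
    rw [norm_smul, Real.norm_eq_abs, abs_of_pos (inv_pos.mpr h0), inv_mul_eq_div,
      div_lt_one h0]
    linarith⟩
  left_inv q := by
    obtain ⟨⟨u, v⟩, h1, h2, h3⟩ := q
    apply Subtype.ext
    simp only
    refine Prod.ext rfl ?_
    have ha : (0:ℝ) < 1 - ‖v‖ := by linarith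
    have hn : ‖(1 - ‖v‖)⁻¹ • v‖ = (1 - ‖v‖)⁻¹ * ‖v‖ := by
      rw [norm_smul, Real.norm_eq_abs, abs_of_pos (inv_pos.mpr ha)]
    rw [hn, smul_smul]
    have h4 : 1 + (1 - ‖v‖)⁻¹ * ‖v‖ = (1 - ‖v‖)⁻¹ := by
      field_simp
      ring
    rw [h4, inv_inv, mul_inv_cancel₀ ha.ne', one_smul]
  right_inv p := by
    obtain ⟨⟨u, w⟩, h1, h2⟩ := p
    apply Subtype.ext
    simp only
    refine Prod.ext rfl ?_
    have ha : (0:ℝ) < 1 + ‖w‖ := by positivity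
    have hn : ‖(1 + ‖w‖)⁻¹ • w‖ = (1 + ‖w‖)⁻¹ * ‖w‖ := by
      rw [norm_smul, Real.norm_eq_abs, abs_of_pos (inv_pos.mpr ha)]
    rw [hn, smul_smul]
    have h4 : 1 - (1 + ‖w‖)⁻¹ * ‖w‖ = (1 + ‖w‖)⁻¹ := by
      field_simp
      ring
    rw [h4, inv_inv, mul_inv_cancel₀ ha.ne', one_smul]
  continuous_toFun := by
    apply Continuous.subtype_mk
    refine Continuous.prodMk (continuous_fst.comp continuous_subtype_val) ?_
    refine Continuous.smul (f := fun q : TS2disc => (1 - ‖q.val.2‖)⁻¹) (Continuous.inv₀ ?_ ?_) (continuous_snd.comp continuous_subtype_val)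
    · exact (continuous_const.sub (continuous_snd.comp continuous_subtype_val).norm)
    · intro q
      have := q.2.2.2
      intro h
      simp only [sub_eq_zero] at h
      rw [← h] at this
      exact lt_irrefl _ this
  continuous_invFun := by
    apply Continuous.subtype_mk
    refine Continuous.prodMk (continuous_fst.comp continuous_subtype_val) ?_
    refine Continuous.smul (f := fun p : TS2 => (1 + ‖p.val.2‖)⁻¹) (Continuous.inv₀ ?_ ?_) (continuous_snd.comp continuous_subtype_val)
    · exact (continuous_const.add (continuous_snd.comp continuous_subtype_val).norm)
    · intro p
      have : (0:ℝ) < 1 + ‖p.val.2‖ := by positivity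
      exact this.ne'

/-- For `√C + √D > √λ`: every `(v,w) ∈ N` has `|w|² ≥ (√C+√D)² - λ > 0` and `|v| < 1`;
`(v,w) ↦ (w/|w|, v)` is a homeomorphism from `N` onto the open disc bundle
`{(w',v') ∈ S² × ℝ³ : ⟨w',v'⟩ = 0, |v'| < 1}`, which is in turn homeomorphic to `TS²`. -/
theorem NSet_homeo_TS2_supercritical (lam C D : ℝ) (hlam : 0 < lam) (hC : 0 < C) (hD : 0 < D)
    (hsup : Real.sqrt lam < Real.sqrt C + Real.sqrt D) :
    (0 : ℝ) < (Real.sqrt C + Real.sqrt D) ^ 2 - lam ∧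
    (∀ p ∈ NSet lam C D,
      (Real.sqrt C + Real.sqrt D) ^ 2 - lam ≤ ‖p.2‖ ^ 2 ∧ ‖p.1‖ < 1) ∧
    (∃ h : NSet lam C D ≃ₜ TS2disc,
      ∀ p : NSet lam C D,
        (h p : EuclideanSpace ℝ (Fin 3) × EuclideanSpace ℝ (Fin 3)) =
          (‖p.val.2‖⁻¹ • p.val.2, p.val.1)) ∧
    Nonempty (TS2disc ≃ₜ TS2) := by
  set s := Real.sqrt C + Real.sqrt D with hsdef
  have hs0 : 0 < s := by
    have := Real.sqrt_pos.mpr hC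
    have := Real.sqrt_nonneg D
    simp only [hsdef]; linarith
  have hlam_lt : lam < s ^ 2 := by
    nlinarith [Real.sq_sqrt hlam.le, Real.sqrt_nonneg lam]
  -- key per-point facts on N
  have key : ∀ p : E3 × E3, p ∈ NSet lam C D →
      ‖p.1‖ < 1 ∧ s ^ 2 - lam ≤ ‖p.2‖ ^ 2 ∧ ‖p.2‖ ≠ 0 ∧
        Real.sqrt (lam + ‖p.2‖ ^ 2) = s / (1 - ‖p.1‖ ^ 2) := by
    rintro ⟨v, w⟩ ⟨hperp, heq⟩
    simp only at heq ⊢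
    have ht0 : 0 < Real.sqrt (lam + ‖w‖ ^ 2) := Real.sqrt_pos.mpr (by positivity)
    have ht2 : Real.sqrt (lam + ‖w‖ ^ 2) ^ 2 = lam + ‖w‖ ^ 2 := Real.sq_sqrt (by positivity)
    have hv2 : 0 < 1 - ‖v‖ ^ 2 := by nlinarith
    have hv1 : ‖v‖ < 1 := by nlinarith [norm_nonneg v]
    have hts : s ≤ Real.sqrt (lam + ‖w‖ ^ 2) := by nlinarith [sq_nonneg ‖v‖]
    have hw2 : s ^ 2 - lam ≤ ‖w‖ ^ 2 := by nlinarith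
    have hw0 : ‖w‖ ≠ 0 := by
      intro h; rw [h] at hw2; nlinarith
    refine ⟨hv1, hw2, hw0, ?_⟩
    rw [eq_div_iff hv2.ne']
    linear_combination heq
  -- radius function facts on the disc bundle
  have rfacts : ∀ v : E3, ‖v‖ < 1 →
      0 < s ^ 2 / (1 - ‖v‖ ^ 2) ^ 2 - lam ∧
      Real.sqrt (lam + Real.sqrt (s ^ 2 / (1 - ‖v‖ ^ 2) ^ 2 - lam) ^ 2) =
        s / (1 - ‖v‖ ^ 2) := by
    intro v hv
    have ha : 0 < 1 - ‖v‖ ^ 2 := by nlinarith [norm_nonneg v]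
    have ha1 : (1 - ‖v‖ ^ 2) ^ 2 ≤ 1 := by nlinarith [norm_nonneg v]
    have h1 : s ^ 2 ≤ s ^ 2 / (1 - ‖v‖ ^ 2) ^ 2 := by
      rw [le_div_iff₀ (by positivity)]
      nlinarith [sq_nonneg s]
    have hpos : 0 < s ^ 2 / (1 - ‖v‖ ^ 2) ^ 2 - lam := by nlinarith [h1, hlam_lt]
    refine ⟨hpos, ?_⟩
    rw [Real.sq_sqrt hpos.le]
    have : lam + (s ^ 2 / (1 - ‖v‖ ^ 2) ^ 2 - lam) = (s / (1 - ‖v‖ ^ 2)) ^ 2 := by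
      rw [div_pow]; ring
    rw [this, Real.sqrt_sq (by positivity)]
  have memD : ∀ p : NSet lam C D, (‖p.val.2‖⁻¹ • p.val.2, p.val.1) ∈ TS2disc := by
    rintro ⟨⟨v, w⟩, hp⟩
    obtain ⟨hv1, hw2, hw0, -⟩ := key _ hp
    obtain ⟨hperp, -⟩ := hp
    simp only at hv1 hw2 hw0 hperp ⊢
    refine ⟨?_, ?_, hv1⟩
    · rw [norm_smul, Real.norm_eq_abs, abs_of_nonneg (inv_nonneg.mpr (norm_nonneg w)),
        inv_mul_cancel₀ hw0]
    · rw [real_inner_smul_left, real_inner_comm, hperp, mul_zero]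
  have memN : ∀ q : TS2disc,
      ((q : E3 × E3).2,
        Real.sqrt (s ^ 2 / (1 - ‖(q : E3 × E3).2‖ ^ 2) ^ 2 - lam) • (q : E3 × E3).1) ∈
        NSet lam C D := by
    rintro ⟨⟨u, v⟩, hu, hperp, hv⟩
    simp only at hu hperp hv ⊢
    obtain ⟨hpos, hsq⟩ := rfacts v hv
    set r := Real.sqrt (s ^ 2 / (1 - ‖v‖ ^ 2) ^ 2 - lam) with hrdef
    have hr0 : 0 ≤ r := Real.sqrt_nonneg _
    have ha : 0 < 1 - ‖v‖ ^ 2 := by nlinarith [norm_nonneg v]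
    constructor
    · rw [real_inner_smul_right, real_inner_comm, hperp, mul_zero]
    · have hn : ‖r • u‖ = r := by
        rw [norm_smul, Real.norm_eq_abs, abs_of_nonneg hr0, hu, mul_one]
      rw [hn, hsq]
      field_simp
      exact hsdef
  refine ⟨by linarith, fun p hp => ⟨(key p hp).2.1, (key p hp).1⟩, ⟨⟨{
      toFun := fun p => ⟨(‖p.val.2‖⁻¹ • p.val.2, p.val.1), memD p⟩
      invFun := fun q => ⟨((q : E3 × E3).2,
        Real.sqrt (s ^ 2 / (1 - ‖(q : E3 × E3).2‖ ^ 2) ^ 2 - lam) • (q : E3 × E3).1), memN q⟩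
      left_inv := ?_
      right_inv := ?_
      continuous_toFun := ?_
      continuous_invFun := ?_ }, fun p => rfl⟩, ?_⟩⟩
  · -- left inverse
    rintro ⟨⟨v, w⟩, hp⟩
    obtain ⟨hv1, hw2, hw0, hsqrt⟩ := key _ hp
    simp only at hv1 hw2 hw0 hsqrt
    apply Subtype.ext
    simp only
    refine Prod.ext rfl ?_
    have ha : 0 < 1 - ‖v‖ ^ 2 := by nlinarith [norm_nonneg v]
    have hrw : Real.sqrt (s ^ 2 / (1 - ‖v‖ ^ 2) ^ 2 - lam) = ‖w‖ := by
      have h1 : lam + ‖w‖ ^ 2 = s ^ 2 / (1 - ‖v‖ ^ 2) ^ 2 := by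
        have h := Real.sq_sqrt (show (0:ℝ) ≤ lam + ‖w‖ ^ 2 by positivity)
        rw [hsqrt, div_pow] at h
        linarith
      have h2 : s ^ 2 / (1 - ‖v‖ ^ 2) ^ 2 - lam = ‖w‖ ^ 2 := by linarith
      rw [h2, Real.sqrt_sq (norm_nonneg w)]
    rw [hrw, smul_smul, mul_inv_cancel₀ hw0, one_smul]
  · -- right inverse
    rintro ⟨⟨u, v⟩, hu, hperp, hv⟩
    obtain ⟨hpos, -⟩ := rfacts v hv
    apply Subtype.ext
    simp only
    refine Prod.ext ?_ rfl
    set r := Real.sqrt (s ^ 2 / (1 - ‖v‖ ^ 2) ^ 2 - lam) with hrdef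
    have hr0 : 0 < r := Real.sqrt_pos.mpr hpos
    have hn : ‖r • u‖ = r := by
      rw [norm_smul, Real.norm_eq_abs, abs_of_pos hr0, hu, mul_one]
    rw [hn, smul_smul, inv_mul_cancel₀ hr0.ne', one_smul]
  · -- continuity of toFun
    apply Continuous.subtype_mk
    refine Continuous.prodMk ?_ (continuous_fst.comp continuous_subtype_val)
    refine Continuous.smul (Continuous.inv₀ (continuous_snd.comp continuous_subtype_val).norm
      ?_) (continuous_snd.comp continuous_subtype_val)
    intro p
    exact (key _ p.2).2.2.1
  · -- continuity of invFun
    apply Continuous.subtype_mk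
    refine Continuous.prodMk (continuous_snd.comp continuous_subtype_val) ?_
    refine Continuous.smul (f := fun q : TS2disc => Real.sqrt (s ^ 2 / (1 - ‖(q : E3 × E3).2‖ ^ 2) ^ 2 - lam)) ?_ (continuous_fst.comp continuous_subtype_val)
    apply Real.continuous_sqrt.comp
    apply Continuous.sub ?_ continuous_const
    apply Continuous.div continuous_const
    · fun_prop
    · intro q
      have hv := q.2.2.2
      have : 0 < 1 - ‖(q : E3 × E3).2‖ ^ 2 := by nlinarith [norm_nonneg (q : E3 × E3).2]
      positivity
  · exact ⟨discToTS2homeo⟩
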